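/- arXiv:2203.13756 — 2 statements merged into one kernel-verified Lean document; each statement's English description precedes it below -/
import Mathlib

section
/- Let d ≥ 1, n ≥ 0, and let ω_N ⊂ S^d be a spherical 2n-design. Then for every point z ∈ S^d, the set D(z, ω_N) = {z·x : x ∈ ω_N} of dot products contains at least n+1 distinct elements. -/
open scoped RealInnerProductSpace
open MeasureTheory Set

noncomputable section

/-- Euclidean space `ℝ^{d+1}` containing the sphere `S^d`. -/
abbrev E (d : ℕ) := EuclideanSpace ℝ (Fin (d+1))

/-- The unit sphere `S^d ⊂ ℝ^{d+1}`. -/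
def sph (d : ℕ) : Set (E d) := Metric.sphere 0 1

/-- Normalized surface (Hausdorff) measure `σ_d` on `S^d`. -/
def sigmad (d : ℕ) : Measure (E d) :=
  (μH[(d:ℝ)] (sph d))⁻¹ • (μH[(d:ℝ)]).restrict (sph d)

/-- `ω = (x i)` is a spherical `n`-design: averages of polynomials of degree
at most `n` over the configuration coincide with their `σ_d`-averages. -/
def IsDesign (d n : ℕ) {ι : Type} [Fintype ι] (x : ι → E d) : Prop :=
  ∀ p : MvPolynomial (Fin (d+1)) ℝ, p.totalDegree ≤ n →
    (Fintype.card ι : ℝ)⁻¹ * ∑ i, MvPolynomial.eval (fun j => x i j) p =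
      ∫ y, MvPolynomial.eval (fun j => y j) p ∂(sigmad d)

/-- The set of dot products between distinct points of the configuration. -/
def dotSet {d : ℕ} {ι : Type} (x : ι → E d) : Set ℝ :=
  {t | ∃ i j, i ≠ j ∧ (inner ℝ (x i) (x j) : ℝ) = t}

/-- An `m`-sharp configuration on `S^d`: a spherical `(2m-1)`-design whose
distinct points realize exactly `m` distinct dot products. -/
def IsSharp (d m : ℕ) {ι : Type} [Fintype ι] (x : ι → E d) : Prop :=
  (∀ i, x i ∈ sph d) ∧ Function.Injective x ∧
    IsDesign d (2*m-1) x ∧ (dotSet x).ncard = m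

/-- A strongly `m`-sharp configuration: an `m`-sharp configuration which is
moreover a spherical `2m`-design. -/
def IsStronglySharp (d m : ℕ) {ι : Type} [Fintype ι] (x : ι → E d) : Prop :=
  IsSharp d m x ∧ IsDesign d (2*m) x

/-- An antipodal (centrally symmetric) configuration. -/
def IsAntipodal {d : ℕ} {ι : Type} (x : ι → E d) : Prop :=
  ∀ i, ∃ j, x j = -x i

/-!
If fewer than `n + 1` values `⟪z, x i⟫` occur, the square of `∏ₜ (⟪z, y⟫ - t)` over these values
is a polynomial of degree at most `2n` vanishing on the design, so its `σ_d`-integral is `0`.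
It is nonnegative, and its zero set meets `S^d` in finitely many hyperplane sections, which are
`σ_d`-null for `d ≥ 1`; so the integral is positive.

That `σ_d` is a probability measure means `0 < μH[d] (S^d) < ∞`. The projection onto `y^⊥`
(`‖y‖ = 1`) is `1`-Lipschitz and maps `S^d` onto the unit ball of the `d`-dimensional space `y^⊥`,
and it is `3`-antilipschitz on the cap `⟪y, w⟫ > 1/2`; finitely many caps cover `S^d`.
A hyperplane section is isometric to a sphere in `y^⊥`, which is `μH[d]`-null there.
-/

section UnitSphere

variable {F : Type*} [NormedAddCommGroup F] [InnerProductSpace ℝ F] {y : F}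

open Submodule in
lemma inner_smul_add_orthogonalProjectionOnto (hy : ‖y‖ = 1) (w : F) :
    ⟪y, w⟫ • y + ((ℝ ∙ y)ᗮ.orthogonalProjectionOnto w : F) = w := by
  rw [← starProjection_unit_singleton ℝ hy]
  exact starProjection_add_starProjection_orthogonal w

lemma norm_smul_add_sq_of_mem_orthogonal (hy : ‖y‖ = 1) (a : ℝ) {v : F} (hv : v ∈ (ℝ ∙ y)ᗮ) :
    ‖a • y + v‖ ^ 2 = a ^ 2 + ‖v‖ ^ 2 := by
  rw [Submodule.mem_orthogonal_singleton_iff_inner_right] at hv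
  rw [norm_add_sq_real, inner_smul_left, hv, norm_smul, hy]
  simp

lemma orthogonalProjectionOnto_smul_add (a : ℝ) (v : (ℝ ∙ y)ᗮ) :
    (ℝ ∙ y)ᗮ.orthogonalProjectionOnto (a • y + v) = v := by
  simp [Submodule.orthogonalProjectionOnto_orthogonalComplement_singleton_eq_zero]

lemma norm_orthogonalProjectionOnto_sq (hy : ‖y‖ = 1) (w : F) :
    ‖(ℝ ∙ y)ᗮ.orthogonalProjectionOnto w‖ ^ 2 = ‖w‖ ^ 2 - ⟪y, w⟫ ^ 2 := by
  have h := norm_smul_add_sq_of_mem_orthogonal hy ⟪y, w⟫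
    (Submodule.coe_mem ((ℝ ∙ y)ᗮ.orthogonalProjectionOnto w))
  rw [inner_smul_add_orthogonalProjectionOnto hy] at h
  rw [h, Submodule.coe_norm]
  ring

lemma dist_le_three_mul_dist_orthogonalProjectionOnto (hy : ‖y‖ = 1) {w w' : F}
    (hw : ‖w‖ = 1) (hw' : ‖w'‖ = 1) (ha : 1 / 2 ≤ ⟪y, w⟫) (ha' : 1 / 2 ≤ ⟪y, w'⟫) :
    dist w w' ≤ 3 * dist ((ℝ ∙ y)ᗮ.orthogonalProjectionOnto w)
      ((ℝ ∙ y)ᗮ.orthogonalProjectionOnto w') := by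
  set v := (ℝ ∙ y)ᗮ.orthogonalProjectionOnto w
  set v' := (ℝ ∙ y)ᗮ.orthogonalProjectionOnto w'
  have hv := norm_orthogonalProjectionOnto_sq hy w
  have hv' := norm_orthogonalProjectionOnto_sq hy w'
  rw [hw] at hv
  rw [hw'] at hv'
  have hv1 : ‖v‖ ≤ 1 := by nlinarith [norm_nonneg v]
  have hv1' : ‖v'‖ ≤ 1 := by nlinarith [norm_nonneg v']
  have hvv : |‖v'‖ - ‖v‖| ≤ dist v v' := by
    rw [dist_comm, dist_eq_norm]; exact abs_norm_sub_norm_le v' v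
  -- `(a - a') (a + a') = ‖v'‖² - ‖v‖²` for `a = ⟪y, w⟫`, `a' = ⟪y, w'⟫`, and `a + a' ≥ 1`
  have hinner : |⟪y, w⟫ - ⟪y, w'⟫| ≤ 2 * dist v v' := by
    have h : |⟪y, w⟫ - ⟪y, w'⟫| * (⟪y, w⟫ + ⟪y, w'⟫) = |‖v'‖ - ‖v‖| * (‖v'‖ + ‖v‖) := by
      rw [← abs_of_nonneg (by linarith : 0 ≤ ⟪y, w⟫ + ⟪y, w'⟫),
        ← abs_of_nonneg (by positivity : 0 ≤ ‖v'‖ + ‖v‖), ← abs_mul, ← abs_mul]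
      congr 1
      nlinarith
    nlinarith [abs_nonneg (⟪y, w⟫ - ⟪y, w'⟫), abs_nonneg (‖v'‖ - ‖v‖)]
  calc dist w w' = ‖(⟪y, w⟫ • y + (v : F)) - (⟪y, w'⟫ • y + (v' : F))‖ := by
        rw [inner_smul_add_orthogonalProjectionOnto hy w,
          inner_smul_add_orthogonalProjectionOnto hy w', dist_eq_norm]
    _ = ‖(⟪y, w⟫ - ⟪y, w'⟫) • y + ((v : F) - v')‖ := by
        rw [sub_smul]; abel_nf
    _ ≤ |⟪y, w⟫ - ⟪y, w'⟫| + dist v v' := by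
        refine (norm_add_le _ _).trans ?_
        rw [norm_smul, hy, Real.norm_eq_abs, mul_one, dist_eq_norm, ← Submodule.coe_sub,
          Submodule.coe_norm]
    _ ≤ 3 * dist v v' := by linarith

lemma finrank_orthogonal_span_singleton_of_finrank_eq {d : ℕ}
    (hF : Module.finrank ℝ F = d + 1) (hy : y ≠ 0) : Module.finrank ℝ (ℝ ∙ y)ᗮ = d :=
  haveI : Fact (Module.finrank ℝ F = d + 1) := ⟨hF⟩
  Submodule.finrank_orthogonal_span_singleton hy

variable [FiniteDimensional ℝ F] [MeasurableSpace F] [BorelSpace F] {d : ℕ}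

lemma isAddHaarMeasure_hausdorffMeasure_of_finrank_eq {V : Type*} [NormedAddCommGroup V]
    [NormedSpace ℝ V] [FiniteDimensional ℝ V] [MeasurableSpace V] [BorelSpace V]
    (h : Module.finrank ℝ V = d) : (μH[(d : ℝ)] : Measure V).IsAddHaarMeasure :=
  h ▸ isAddHaarMeasure_hausdorffMeasure

lemma hausdorffMeasure_unitSphere_pos (hF : Module.finrank ℝ F = d + 1) :
    0 < μH[(d : ℝ)] (Metric.sphere (0 : F) 1) := by
  have : Nontrivial F := Module.nontrivial_of_finrank_eq_succ hF
  obtain ⟨y, hy⟩ := exists_norm_eq F zero_le_one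
  set K := (ℝ ∙ y)ᗮ
  have hy0 : y ≠ 0 := by rintro rfl; simp at hy
  have := isAddHaarMeasure_hausdorffMeasure_of_finrank_eq
    (finrank_orthogonal_span_singleton_of_finrank_eq hF hy0)
  have hcover : Metric.closedBall (0 : K) 1 ⊆
      K.orthogonalProjectionOnto '' Metric.sphere (0 : F) 1 := by
    intro v hv
    rw [mem_closedBall_zero_iff] at hv
    refine ⟨√(1 - ‖v‖ ^ 2) • y + v, ?_, orthogonalProjectionOnto_smul_add _ v⟩
    rw [mem_sphere_zero_iff_norm, ← sq_eq_sq₀ (norm_nonneg _) zero_le_one,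
      norm_smul_add_sq_of_mem_orthogonal hy _ v.2, Real.sq_sqrt (by nlinarith [norm_nonneg v]),
      Submodule.coe_norm]
    ring
  have hlip : LipschitzWith 1 K.orthogonalProjectionOnto :=
    K.orthogonalProjectionOnto.lipschitz.weaken K.orthogonalProjectionOnto_norm_le
  calc 0 < μH[(d : ℝ)] (Metric.closedBall (0 : K) 1) :=
        Metric.measure_closedBall_pos _ _ one_pos
    _ ≤ μH[(d : ℝ)] (K.orthogonalProjectionOnto '' Metric.sphere (0 : F) 1) :=
        measure_mono hcover
    _ ≤ 1 ^ (d : ℝ) * μH[(d : ℝ)] (Metric.sphere (0 : F) 1) :=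
        hlip.hausdorffMeasure_image_le (Nat.cast_nonneg d) _
    _ = μH[(d : ℝ)] (Metric.sphere (0 : F) 1) := by simp

lemma hausdorffMeasure_unitSphere_inter_cap_lt_top (hF : Module.finrank ℝ F = d + 1)
    (hy : ‖y‖ = 1) : μH[(d : ℝ)] (Metric.sphere (0 : F) 1 ∩ {w | 1 / 2 < ⟪y, w⟫}) < ⊤ := by
  set C := Metric.sphere (0 : F) 1 ∩ {w | 1 / 2 < ⟪y, w⟫}
  set K := (ℝ ∙ y)ᗮ
  have hy0 : y ≠ 0 := by rintro rfl; simp at hy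
  have := isAddHaarMeasure_hausdorffMeasure_of_finrank_eq
    (finrank_orthogonal_span_singleton_of_finrank_eq hF hy0)
  let f : C → K := fun w => K.orthogonalProjectionOnto w
  have hf : AntilipschitzWith 3 f := AntilipschitzWith.of_le_mul_dist fun w w' => by
    exact_mod_cast dist_le_three_mul_dist_orthogonalProjectionOnto hy
      (mem_sphere_zero_iff_norm.mp w.2.1) (mem_sphere_zero_iff_norm.mp w'.2.1)
      w.2.2.le w'.2.2.le
  have hf_ball : f '' univ ⊆ Metric.closedBall 0 1 := by
    rintro _ ⟨w, -, rfl⟩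
    rw [mem_closedBall_zero_iff, ← mem_sphere_zero_iff_norm.mp w.2.1]
    exact (K.orthogonalProjectionOnto.le_of_opNorm_le K.orthogonalProjectionOnto_norm_le
      w).trans_eq (one_mul _)
  calc μH[(d : ℝ)] C = μH[(d : ℝ)] (univ : Set C) := by
        rw [← (isometry_subtype_coe (s := C)).hausdorffMeasure_image
          (Or.inl (Nat.cast_nonneg d)), image_univ, Subtype.range_coe]
    _ ≤ (3 : NNReal) ^ (d : ℝ) * μH[(d : ℝ)] (f '' univ) :=
        hf.le_hausdorffMeasure_image (Nat.cast_nonneg d) _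
    _ ≤ (3 : NNReal) ^ (d : ℝ) * μH[(d : ℝ)] (Metric.closedBall (0 : K) 1) := by
        gcongr
    _ < ⊤ := ENNReal.mul_lt_top (by simp) (isCompact_closedBall _ _).measure_lt_top

lemma hausdorffMeasure_unitSphere_lt_top (hF : Module.finrank ℝ F = d + 1) :
    μH[(d : ℝ)] (Metric.sphere (0 : F) 1) < ⊤ :=
  (isCompact_sphere 0 1).measure_lt_top_of_nhdsWithin fun y hy => by
    have hy : ‖y‖ = 1 := mem_sphere_zero_iff_norm.mp hy
    have hcap : {w | 1 / 2 < ⟪y, w⟫} ∈ nhds y :=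
      (isOpen_lt continuous_const (continuous_const.inner continuous_id)).mem_nhds
        (by simp [hy]; norm_num)
    exact ⟨_, inter_mem_nhdsWithin _ hcap, hausdorffMeasure_unitSphere_inter_cap_lt_top hF hy⟩

lemma hausdorffMeasure_hyperplane_inter_unitSphere_eq_zero (hF : Module.finrank ℝ F = d + 1)
    (hd : 1 ≤ d) (hy : ‖y‖ = 1) (t : ℝ) :
    μH[(d : ℝ)] ({w | ⟪y, w⟫ = t} ∩ Metric.sphere (0 : F) 1) = 0 := by
  set K := (ℝ ∙ y)ᗮ
  have hy0 : y ≠ 0 := by rintro rfl; simp at hy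
  have hK := finrank_orthogonal_span_singleton_of_finrank_eq hF hy0
  have := isAddHaarMeasure_hausdorffMeasure_of_finrank_eq hK
  have : Nontrivial K := Module.nontrivial_of_finrank_pos (by rw [hK]; omega)
  let g : K → F := fun v => t • y + v
  have hg : Isometry g := (IsometryEquiv.addLeft (t • y)).isometry.comp isometry_subtype_coe
  have hsub :
      {w | ⟪y, w⟫ = t} ∩ Metric.sphere (0 : F) 1 ⊆ g '' Metric.sphere 0 √(1 - t ^ 2) := by
    rintro w ⟨hwt, hw⟩
    refine ⟨K.orthogonalProjectionOnto w, ?_, ?_⟩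
    · rw [mem_sphere_zero_iff_norm, ← Real.sqrt_sq (norm_nonneg _),
        norm_orthogonalProjectionOnto_sq hy, mem_sphere_zero_iff_norm.mp hw, hwt.out, one_pow]
    · show t • y + _ = w
      rw [← hwt.out]
      exact inner_smul_add_orthogonalProjectionOnto hy w
  refine measure_mono_null hsub ?_
  rw [hg.hausdorffMeasure_image (Or.inl (Nat.cast_nonneg d))]
  exact Measure.addHaar_sphere _ _ _

end UnitSphere

section SurfaceMeasure

variable {d : ℕ}

instance isProbabilityMeasure_sigmad : IsProbabilityMeasure (sigmad d) := by
  constructor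
  rw [sigmad, Measure.smul_apply, Measure.restrict_apply_univ, smul_eq_mul]
  exact ENNReal.inv_mul_cancel (hausdorffMeasure_unitSphere_pos finrank_euclideanSpace_fin).ne'
    (hausdorffMeasure_unitSphere_lt_top finrank_euclideanSpace_fin).ne

lemma sigmad_hyperplane_eq_zero (hd : 1 ≤ d) {z : E d} (hz : z ∈ sph d) (t : ℝ) :
    sigmad d {y | ⟪z, y⟫ = t} = 0 := by
  rw [sigmad, Measure.smul_apply,
    Measure.restrict_apply (measurableSet_eq_fun (by fun_prop) measurable_const), sph,
    hausdorffMeasure_hyperplane_inter_unitSphere_eq_zero finrank_euclideanSpace_fin hd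
      (mem_sphere_zero_iff_norm.mp hz), smul_zero]

lemma Continuous.integrable_sigmad {f : E d → ℝ} (hf : Continuous f) : Integrable f (sigmad d) := by
  have hsph : ∀ᵐ y ∂sigmad d, y ∈ sph d :=
    Measure.ae_smul_measure (ae_restrict_mem Metric.isClosed_sphere.measurableSet) _
  rw [← Measure.restrict_eq_self_of_ae_mem hsph]
  exact hf.continuousOn.integrableOn_compact (isCompact_sphere 0 1)

lemma integral_sq_prod_inner_sub_pos (hd : 1 ≤ d) {z : E d} (hz : z ∈ sph d) (T : Finset ℝ) :
    0 < ∫ y, (∏ t ∈ T, (⟪z, y⟫ - t)) ^ 2 ∂sigmad d := by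
  rw [integral_pos_iff_support_of_nonneg (fun y => sq_nonneg _)
    ((continuous_finsetProd T fun t _ => by fun_prop).pow 2).integrable_sigmad]
  have hae : ∀ᵐ y ∂sigmad d, ∀ t ∈ T, ⟪z, y⟫ ≠ t :=
    Filter.eventually_all_finset T |>.mpr fun t _ =>
      measure_eq_zero_iff_ae_notMem.mp (sigmad_hyperplane_eq_zero hd hz t)
  refine pos_iff_ne_zero.mpr fun h0 => ?_
  obtain ⟨y, hy, hy0⟩ := (hae.and (measure_eq_zero_iff_ae_notMem.mp h0)).exists
  exact hy0 (pow_ne_zero 2 (Finset.prod_ne_zero_iff.mpr fun t ht => sub_ne_zero.mpr (hy t ht)))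

end SurfaceMeasure

section Polynomials

open MvPolynomial

variable {ι : Type*} [Fintype ι]

def innerPoly (z : EuclideanSpace ℝ ι) : MvPolynomial ι ℝ := ∑ j, C (z j) * X j

lemma eval_innerPoly (z y : EuclideanSpace ℝ ι) :
    eval (fun j => y j) (innerPoly z) = ⟪z, y⟫ := by
  simp [innerPoly, PiLp.inner_apply, mul_comm]

lemma totalDegree_innerPoly_le (z : EuclideanSpace ℝ ι) : (innerPoly z).totalDegree ≤ 1 :=
  totalDegree_finsetSum_le fun j _ =>
    (totalDegree_mul _ _).trans (by rw [totalDegree_C, totalDegree_X])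

lemma totalDegree_prod_innerPoly_sub_C_le (z : EuclideanSpace ℝ ι) (T : Finset ℝ) :
    (∏ t ∈ T, (innerPoly z - C t)).totalDegree ≤ T.card :=
  (totalDegree_finsetProd _ _).trans <| by
    simpa using Finset.sum_le_sum fun t _ =>
      (totalDegree_sub_C_le (innerPoly z) t).trans (totalDegree_innerPoly_le z)

lemma eval_prod_innerPoly_sub_C (z y : EuclideanSpace ℝ ι) (T : Finset ℝ) :
    eval (fun j => y j) (∏ t ∈ T, (innerPoly z - C t)) = ∏ t ∈ T, (⟪z, y⟫ - t) := by
  simp [eval_innerPoly]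

end Polynomials

lemma IsDesign.integral_eval_eq_zero {d m : ℕ} {κ : Type} [Fintype κ] {x : κ → E d}
    (h : IsDesign d m x) {p : MvPolynomial (Fin (d + 1)) ℝ} (hp : p.totalDegree ≤ m)
    (hzero : ∀ i, MvPolynomial.eval (fun j => x i j) p = 0) :
    ∫ y, MvPolynomial.eval (fun j => y j) p ∂sigmad d = 0 := by
  rw [← h p hp]
  simp [hzero]

theorem design_dot_products_lower_bound_general (d n N : ℕ) (hd : 1 ≤ d)
    (x : Fin N → E d) (hdes : IsDesign d (2*n) x) :
    ∀ z ∈ sph d, n + 1 ≤ (Set.range fun i => (inner ℝ z (x i) : ℝ)).ncard := by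
  intro z hz
  by_contra! hlt
  set D := (Set.finite_range fun i => ⟪z, x i⟫).toFinset
  have hD : D.card ≤ n :=
    Nat.le_of_lt_succ (by rwa [Set.ncard_eq_toFinset_card _ (Set.finite_range _)] at hlt)
  have hdeg : ((∏ t ∈ D, (innerPoly z - MvPolynomial.C t)) ^ 2).totalDegree ≤ 2 * n :=
    (MvPolynomial.totalDegree_pow _ 2).trans (by
      have := totalDegree_prod_innerPoly_sub_C_le z D; omega)
  have hzero := hdes.integral_eval_eq_zero hdeg fun i => by
    rw [map_pow, eval_prod_innerPoly_sub_C, Finset.prod_eq_zero (by simp [D]) (sub_self _),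
      zero_pow two_ne_zero]
  simp only [map_pow, eval_prod_innerPoly_sub_C] at hzero
  exact (integral_sq_prod_inner_sub_pos hd hz D).ne' hzero

/-- For a spherical `2n`-design on `S^d` and any `z ∈ S^d`, the set of dot
products `D(z, ω_N)` contains at least `n+1` distinct elements. -/
theorem design_dot_products_lower_bound (d n N : ℕ) (hd : 1 ≤ d)
    (x : Fin N → E d) (hx : ∀ i, x i ∈ sph d) (hdes : IsDesign d (2*n) x) :
    ∀ z ∈ sph d, n + 1 ≤ (Set.range fun i => (inner ℝ z (x i) : ℝ)).ncard :=
  design_dot_products_lower_bound_general d n N hd x hdes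
end
end

section
/- Let d, m ≥ 1 and let ω_N be a strongly m-sharp configuration on S^d (i.e., an m-distance set that is a spherical 2m-design). Then no dot product between two distinct vectors in ω_N equals -1; that is, ω_N contains no antipodal pair of points. -/
open scoped RealInnerProductSpace
open MeasureTheory Set

noncomputable section

/-! If `⟪x i, x j⟫ = -1`, put `e = x i` and let `T` be the set of the other `m - 1` dot
products. The polynomial `q(t) = (1 - t²) ∏_{c ∈ T} (t - c)²` has degree `2m` and vanishes at
every `⟪e, x l⟫`, so by the design property the sphere average of `y ↦ q ⟪e, y⟫` is zero.
But this function is continuous, nonnegative and not identically zero on the sphere, and the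
normalized surface measure charges every nonempty relatively open subset of the sphere, so the
average is positive. -/

open Polynomial

theorem MvPolynomial.totalDegree_aeval_le {σ R : Type*} [CommSemiring R] (L : MvPolynomial σ R)
    (q : R[X]) : (Polynomial.aeval L q).totalDegree ≤ q.natDegree * L.totalDegree := by
  rw [aeval_eq_sum_range]
  refine (totalDegree_finsetSum _ _).trans (Finset.sup_le fun i hi => ?_)
  refine (totalDegree_smul_le _ _).trans ((totalDegree_pow _ _).trans ?_)
  exact Nat.mul_le_mul_right _ (Nat.lt_succ_iff.mp (Finset.mem_range.mp hi))

section Sphere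

variable {F : Type*} [NormedAddCommGroup F] [InnerProductSpace ℝ F]

theorem Icc_subset_image_inner_sphere (h : 1 < Module.rank ℝ F) {e : F} (he : ‖e‖ = 1) :
    Icc (-1 : ℝ) 1 ⊆ (fun y => ⟪e, y⟫) '' Metric.sphere 0 1 := by
  have hcont : Continuous fun y : F => ⟪e, y⟫ := continuous_const.inner continuous_id
  have := (isPreconnected_sphere h 0 1).intermediate_value (a := -e) (b := e)
    (by simpa using he) (by simpa using he) hcont.continuousOn
  simpa [inner_neg_right, real_inner_self_eq_norm_sq, he] using this

/-- Reflections in hyperplanes move any point of the sphere to any other, so finitely many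
isometric copies of `sphere 0 r ∩ W` cover the sphere. -/
theorem measure_sphere_inter_ne_zero [FiniteDimensional ℝ F] [MeasurableSpace F] {μ : Measure F}
    (hμ : ∀ (g : F ≃ₗᵢ[ℝ] F) (s : Set F), μ (g '' s) = μ s) {r : ℝ}
    (hr : μ (Metric.sphere 0 r) ≠ 0) {W : Set F} (hW : IsOpen W)
    (hne : (Metric.sphere (0 : F) r ∩ W).Nonempty) : μ (Metric.sphere 0 r ∩ W) ≠ 0 := by
  obtain ⟨y₀, hy₀, hy₀W⟩ := hne
  let g : F → F ≃ₗᵢ[ℝ] F := fun z => Submodule.reflection (ℝ ∙ (y₀ - z))ᗮ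
  have hg : ∀ z ∈ Metric.sphere (0 : F) r, g z y₀ = z := fun z hz =>
    Submodule.reflection_sub
      (by rw [mem_sphere_zero_iff_norm.1 hy₀, mem_sphere_zero_iff_norm.1 hz])
  obtain ⟨b, -, hb, hcover⟩ := (isCompact_sphere (0 : F) r).elim_finite_subcover_image
    (fun z _ => (g z).toHomeomorph.isOpenMap W hW)
    (fun z hz => mem_iUnion₂.2 ⟨z, hz, y₀, hy₀W, hg z hz⟩)
  have hsub : Metric.sphere 0 r ⊆ ⋃ z ∈ b, g z '' (Metric.sphere 0 r ∩ W) := by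
    intro y hy
    obtain ⟨z, hz, w, hw, rfl⟩ := mem_iUnion₂.1 (hcover hy)
    exact mem_iUnion₂.2 ⟨z, hz, w, ⟨by simpa using hy, hw⟩, rfl⟩
  exact fun h0 => hr (measure_mono_null hsub
    ((measure_biUnion_null_iff hb.countable).2 fun z _ => (hμ (g z) _).trans h0))

end Sphere

theorem measurableSet_sph (d : ℕ) : MeasurableSet (sph d) :=
  Metric.isClosed_sphere.measurableSet

theorem sigmad_apply (d : ℕ) (s : Set (E d)) :
    sigmad d s = (μH[(d:ℝ)] (sph d))⁻¹ * μH[(d:ℝ)] (s ∩ sph d) := by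
  rw [sigmad, Measure.smul_apply, Measure.restrict_apply' (measurableSet_sph d),
    smul_eq_mul]

theorem ae_mem_sph_sigmad (d : ℕ) : ∀ᵐ y ∂sigmad d, y ∈ sph d :=
  Measure.ae_smul_measure (ae_restrict_mem (measurableSet_sph d)) _

/-- The degree-`0` design identity rules out the junk cases `μH[d] (sph d) ∈ {0, ∞}`, in which
`sigmad d = 0`. -/
theorem IsDesign.isProbabilityMeasure_sigmad {d n : ℕ} {ι : Type} [Fintype ι] [Nonempty ι]
    {x : ι → E d} (hx : IsDesign d n x) : IsProbabilityMeasure (sigmad d) := by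
  have h := hx 1 (by simp)
  simp only [map_one, Finset.sum_const, Finset.card_univ, nsmul_eq_mul, mul_one, ne_eq,
    Nat.cast_eq_zero, Fintype.card_ne_zero, not_false_eq_true, inv_mul_cancel₀, integral_const,
    smul_eq_mul] at h
  exact ⟨(ENNReal.toReal_eq_one_iff _).1 h.symm⟩

theorem hausdorffMeasure_sph_ne_zero_ne_top (d : ℕ) [IsProbabilityMeasure (sigmad d)] :
    μH[(d:ℝ)] (sph d) ≠ 0 ∧ μH[(d:ℝ)] (sph d) ≠ ⊤ := by
  have h := measure_univ (μ := sigmad d)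
  rw [sigmad_apply, univ_inter] at h
  constructor <;> intro h0 <;> simp [h0] at h

theorem sigmad_ne_zero_of_isOpen {d : ℕ} [IsProbabilityMeasure (sigmad d)] {W : Set (E d)}
    (hW : IsOpen W) (hne : (sph d ∩ W).Nonempty) : sigmad d W ≠ 0 := by
  obtain ⟨h0, htop⟩ := hausdorffMeasure_sph_ne_zero_ne_top d
  rw [sigmad_apply, inter_comm]
  exact mul_ne_zero (ENNReal.inv_ne_zero.2 htop) (measure_sphere_inter_ne_zero
    (fun g s => g.isometry.hausdorffMeasure_image (Or.inr g.surjective) s) h0 hW hne)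

theorem integral_sigmad_pos {d : ℕ} [IsProbabilityMeasure (sigmad d)] {f : E d → ℝ}
    (hf : Continuous f) (hnn : ∀ y ∈ sph d, 0 ≤ f y) (hpos : ∃ y ∈ sph d, f y ≠ 0) :
    0 < ∫ y, f y ∂sigmad d := by
  obtain ⟨C, hC⟩ := (isCompact_sphere (0 : E d) 1).exists_bound_of_continuousOn hf.continuousOn
  have hint : Integrable f (sigmad d) := Integrable.of_bound hf.aestronglyMeasurable C
    (by filter_upwards [ae_mem_sph_sigmad d] with y hy using hC y hy)
  rw [integral_pos_iff_support_of_nonneg_ae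
    (by filter_upwards [ae_mem_sph_sigmad d] with y hy using hnn y hy) hint, pos_iff_ne_zero]
  exact sigmad_ne_zero_of_isOpen hf.isOpen_support hpos

theorem IsDesign.average_eval_inner {d n : ℕ} {ι : Type} [Fintype ι] {x : ι → E d}
    (hx : IsDesign d n x) (e : E d) {q : ℝ[X]} (hq : q.natDegree ≤ n) :
    (Fintype.card ι : ℝ)⁻¹ * ∑ i, q.eval ⟪e, x i⟫ = ∫ y, q.eval ⟪e, y⟫ ∂sigmad d := by
  let L : MvPolynomial (Fin (d + 1)) ℝ := ∑ j, MvPolynomial.C (e j) * MvPolynomial.X j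
  have hL : ∀ y : E d, MvPolynomial.eval (fun j => y j) L = ⟪e, y⟫ := fun y => by
    simp [L, PiLp.inner_apply, mul_comm]
  have hLdeg : L.totalDegree ≤ 1 := by
    refine (MvPolynomial.totalDegree_finsetSum _ _).trans (Finset.sup_le fun j _ => ?_)
    refine (MvPolynomial.totalDegree_mul _ _).trans ?_
    simp [MvPolynomial.totalDegree_X]
  have hdeg : (Polynomial.aeval L q).totalDegree ≤ n :=
    (MvPolynomial.totalDegree_aeval_le L q).trans
      ((Nat.mul_le_mul_left _ hLdeg).trans (by rwa [mul_one]))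
  have heval : ∀ y : E d,
      MvPolynomial.eval (fun j => y j) (Polynomial.aeval L q) = q.eval ⟪e, y⟫ := fun y => by
    rw [← MvPolynomial.aeval_eq_eval, ← Polynomial.aeval_algHom_apply,
        MvPolynomial.aeval_eq_eval, hL, Polynomial.coe_aeval_eq_eval]
  simpa only [heval] using hx _ hdeg

theorem integral_eval_inner_pos {d : ℕ} (hd : 1 ≤ d) [IsProbabilityMeasure (sigmad d)] {e : E d}
    (he : ‖e‖ = 1) {q : ℝ[X]} (hq : q ≠ 0) (hnn : ∀ t ∈ Icc (-1 : ℝ) 1, 0 ≤ q.eval t) :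
    0 < ∫ y, q.eval ⟪e, y⟫ ∂sigmad d := by
  obtain ⟨t, ht, hqt⟩ : ∃ t ∈ Icc (-1 : ℝ) 1, q.eval t ≠ 0 := by
    by_contra! h
    exact hq (q.eq_zero_of_infinite_isRoot ((Icc_infinite (by norm_num)).mono h))
  have hrank : 1 < Module.rank ℝ (E d) := by
    rw [← Module.finrank_eq_rank, finrank_euclideanSpace_fin]
    exact_mod_cast Nat.succ_lt_succ hd
  obtain ⟨y, hy, rfl⟩ := Icc_subset_image_inner_sphere hrank he ht
  exact integral_sigmad_pos (by fun_prop)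
    (fun z hz => hnn _ (real_inner_mem_Icc_of_norm_eq_one he (mem_sphere_zero_iff_norm.1 hz)))
    ⟨y, hy, hqt⟩

def annihilatingPoly (T : Finset ℝ) : ℝ[X] := (1 - X ^ 2) * ∏ c ∈ T, (X - C c) ^ 2

theorem natDegree_annihilatingPoly_le (T : Finset ℝ) :
    (annihilatingPoly T).natDegree ≤ 2 * (T.card + 1) := by
  refine natDegree_mul_le.trans ?_
  have h1 : (1 - X ^ 2 : ℝ[X]).natDegree ≤ 2 := by compute_degree
  have h2 : (∏ c ∈ T, (X - C c) ^ 2).natDegree ≤ 2 * T.card := by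
    refine (natDegree_prod_le _ _).trans ?_
    simp [mul_comm]
  omega

theorem annihilatingPoly_ne_zero (T : Finset ℝ) : annihilatingPoly T ≠ 0 := by
  refine mul_ne_zero (fun h => by simpa using congrArg (eval 0) h) ?_
  exact Finset.prod_ne_zero_iff.2 fun c _ => pow_ne_zero 2 (X_sub_C_ne_zero c)

theorem eval_annihilatingPoly_nonneg (T : Finset ℝ) {t : ℝ} (ht : t ∈ Icc (-1 : ℝ) 1) :
    0 ≤ (annihilatingPoly T).eval t := by
  simp only [annihilatingPoly, eval_mul, eval_sub, eval_one, eval_pow, eval_X, eval_prod, eval_C]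
  exact mul_nonneg (by nlinarith [ht.1, ht.2]) (Finset.prod_nonneg fun c _ => sq_nonneg _)

theorem eval_annihilatingPoly_eq_zero (T : Finset ℝ) {t : ℝ} (ht : t = 1 ∨ t = -1 ∨ t ∈ T) :
    (annihilatingPoly T).eval t = 0 := by
  simp only [annihilatingPoly, eval_mul, eval_sub, eval_one, eval_pow, eval_X, eval_prod, eval_C]
  rcases ht with rfl | rfl | ht
  · ring
  · ring
  · exact mul_eq_zero_of_right _ (Finset.prod_eq_zero ht (by ring))

/-- A strongly `m`-sharp configuration on `S^d` contains no antipodal pair: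
no dot product between distinct points equals `-1`. -/
theorem strongly_sharp_no_antipodal_pair (d m N : ℕ) (hd : 1 ≤ d) (hm : 1 ≤ m)
    (x : Fin N → E d) (hsharp : IsStronglySharp d m x) :
    ∀ i j, i ≠ j → (inner ℝ (x i) (x j) : ℝ) ≠ -1 := by
  intro i j hij hinner
  obtain ⟨⟨hsph, -, -, hcard⟩, hdes⟩ := hsharp
  have : Nonempty (Fin N) := ⟨i⟩
  have := hdes.isProbabilityMeasure_sigmad
  have hfin : (dotSet x).Finite := finite_of_ncard_pos (by omega)
  set T := hfin.toFinset.erase (-1)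
  have hT : T.card = m - 1 := by
    rw [Finset.card_erase_of_mem (hfin.mem_toFinset.2 ⟨i, j, hij, hinner⟩),
      ← ncard_eq_toFinset_card _ hfin, hcard]
  have hvanish : ∀ l, (annihilatingPoly T).eval ⟪x i, x l⟫ = 0 := by
    intro l
    refine eval_annihilatingPoly_eq_zero T ?_
    by_cases hl : l = i
    · subst hl
      left
      rw [real_inner_self_eq_norm_sq, mem_sphere_zero_iff_norm.1 (hsph l), one_pow]
    · right
      by_cases h1 : ⟪x i, x l⟫ = -1
      · exact .inl h1
      · exact .inr (Finset.mem_erase.2 ⟨h1, hfin.mem_toFinset.2 ⟨i, l, Ne.symm hl, rfl⟩⟩)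
  have hzero := hdes.average_eval_inner (x i)
    ((natDegree_annihilatingPoly_le T).trans (by omega))
  simp only [hvanish, Finset.sum_const_zero, mul_zero] at hzero
  exact (integral_eval_inner_pos hd (mem_sphere_zero_iff_norm.1 (hsph i))
    (annihilatingPoly_ne_zero T) fun t ht => eval_annihilatingPoly_nonneg T ht).ne hzero
end
end
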